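/- For an idempotent semiring S, the following are equivalent: (1) S satisfies x ≈ xyx + x + xyx; (2) S satisfies both xz ≈ xz + xyz and xz ≈ xyz + xz; (3) S satisfies xz ≈ xyz + xz + xyz. -/
import Mathlib


class IdemSemiring' (S : Type*) extends Add S, Mul S where
  add_assoc : ∀ a b c : S, a + b + c = a + (b + c)
  mul_assoc : ∀ a b c : S, a * b * c = a * (b * c)
  left_distrib : ∀ a b c : S, a * (b + c) = a * b + a * c
  right_distrib : ∀ a b c : S, (a + b) * c = a * c + b * c
  add_idem : ∀ a : S, a + a = a
  mul_idem : ∀ a : S, a * a = a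

def sigmaRel {S : Type*} [IdemSemiring' S] (a b : S) : Prop :=
  a * b * a = a * b * a + a + a * b * a ∧ b * a * b = b * a * b + b + b * a * b

section Aux

variable {S : Type*} [IdemSemiring' S]

private lemma isr_ma (a b c : S) : a * b * c = a * (b * c) := IdemSemiring'.mul_assoc a b c
private lemma isr_aa (a b c : S) : a + b + c = a + (b + c) := IdemSemiring'.add_assoc a b c
private lemma isr_ld (a b c : S) : a * (b + c) = a * b + a * c := IdemSemiring'.left_distrib a b c
private lemma isr_rd (a b c : S) : (a + b) * c = a * c + b * c := IdemSemiring'.right_distrib a b c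
private lemma isr_ai (a : S) : a + a = a := IdemSemiring'.add_idem a
private lemma isr_mi (a : S) : a * a = a := IdemSemiring'.mul_idem a

private lemma isr_absL (h : ∀ x y : S, x = x * y * x + x + x * y * x) (a b : S) :
    a + a * b * a = a := by
  have hm := h a b
  calc a + a * b * a = a * b * a + a + a * b * a + a * b * a := by rw [← hm]
    _ = a * b * a + a + (a * b * a + a * b * a) :=
        isr_aa (a * b * a + a) (a * b * a) (a * b * a)
    _ = a * b * a + a + a * b * a := by rw [isr_ai (a * b * a)]
    _ = a := hm.symm

private lemma isr_absR (h : ∀ x y : S, x = x * y * x + x + x * y * x) (a b : S) :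
    a * b * a + a = a := by
  have hm := h a b
  calc a * b * a + a = a * b * a + (a * b * a + a + a * b * a) := by rw [← hm]
    _ = a * b * a + (a * b * a + a) + a * b * a :=
        (isr_aa (a * b * a) (a * b * a + a) (a * b * a)).symm
    _ = a * b * a + a * b * a + a + a * b * a := by
        rw [← isr_aa (a * b * a) (a * b * a) a]
    _ = a * b * a + a + a * b * a := by rw [isr_ai (a * b * a)]
    _ = a := hm.symm

private lemma isr_dup2 (a b t : S) : a * (b * (a * (b * t))) = a * (b * t) := by
  calc a * (b * (a * (b * t))) = a * b * (a * (b * t)) := (isr_ma a b (a * (b * t))).symm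
    _ = a * b * (a * b * t) := by rw [isr_ma a b t]
    _ = a * b * (a * b) * t := (isr_ma (a * b) (a * b) t).symm
    _ = a * b * t := by rw [isr_mi (a * b)]
    _ = a * (b * t) := isr_ma a b t

private lemma isr_key (h : ∀ x y : S, x = x * y * x + x + x * y * x) (x y z : S) :
    x * z + x * y * z = x * z ∧ x * y * z + x * z = x * z := by
  have e1 : x * y * z = x * y * z * x * (z * (x * y) * z) := by
    simp only [isr_ma]
    rw [isr_dup2 z x (y * z)]
    conv_lhs => rw [← isr_mi (x * (y * z))]
    simp only [isr_ma]
  have e2 : x * y * z * x * z = x * (y * z) * x * z := by simp only [isr_ma]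
  have s1L : x * y * z * x * (z * (x * y) * z) + x * y * z * x * z = x * y * z * x * z := by
    rw [← isr_ld, isr_absR h z (x * y)]
  have s1R : x * y * z * x * z + x * y * z * x * (z * (x * y) * z) = x * y * z * x * z := by
    rw [← isr_ld, isr_absL h z (x * y)]
  rw [← e1] at s1L s1R
  have s2L : x * (y * z) * x * z + x * z = x * z := by
    rw [← isr_rd, isr_absR h x (y * z)]
  have s2R : x * z + x * (y * z) * x * z = x * z := by
    rw [← isr_rd, isr_absL h x (y * z)]
  rw [← e2] at s2L s2R
  constructor
  · calc x * z + x * y * z = x * z + x * y * z * x * z + x * y * z := by rw [s2R]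
      _ = x * z + (x * y * z * x * z + x * y * z) := isr_aa _ _ _
      _ = x * z + x * y * z * x * z := by rw [s1R]
      _ = x * z := s2R
  · calc x * y * z + x * z = x * y * z + (x * y * z * x * z + x * z) := by rw [s2L]
      _ = x * y * z + x * y * z * x * z + x * z := (isr_aa _ _ _).symm
      _ = x * y * z * x * z + x * z := by rw [s1L]
      _ = x * z := s2L

end Aux

theorem stmt15 {S : Type*} [IdemSemiring' S] :
    ((∀ x y : S, x = x * y * x + x + x * y * x) ↔
      (∀ x y z : S, x * z = x * z + x * y * z ∧ x * z = x * y * z + x * z)) ∧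
    ((∀ x y z : S, x * z = x * z + x * y * z ∧ x * z = x * y * z + x * z) ↔
      (∀ x y z : S, x * z = x * y * z + x * z + x * y * z)) := by
  constructor
  · constructor
    · intro h x y z
      exact ⟨((isr_key h x y z).1).symm, ((isr_key h x y z).2).symm⟩
    · intro h x y
      have hx := h x y x
      rw [isr_mi x] at hx
      calc x = x * y * x + x := hx.2
        _ = x * y * x + (x + x * y * x) := by rw [← hx.1]
        _ = x * y * x + x + x * y * x := (isr_aa _ _ _).symm
  · constructor
    · intro h x y z
      obtain ⟨h1, h2⟩ := h x y z
      calc x * z = x * y * z + x * z := h2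
        _ = x * y * z + (x * z + x * y * z) := by rw [← h1]
        _ = x * y * z + x * z + x * y * z := (isr_aa _ _ _).symm
    · intro h x y z
      have h3 := h x y z
      constructor
      · have e : x * z + x * y * z = x * z := by
          calc x * z + x * y * z = x * y * z + x * z + x * y * z + x * y * z := by rw [← h3]
            _ = x * y * z + x * z + (x * y * z + x * y * z) := isr_aa _ _ _
            _ = x * y * z + x * z + x * y * z := by rw [isr_ai (x * y * z)]
            _ = x * z := h3.symm
        exact e.symm
      · have e : x * y * z + x * z = x * z := by
          calc x * y * z + x * z = x * y * z + (x * y * z + x * z + x * y * z) := by rw [← h3]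
            _ = x * y * z + (x * y * z + x * z) + x * y * z := (isr_aa _ _ _).symm
            _ = x * y * z + x * y * z + x * z + x * y * z := by
                rw [← isr_aa (x * y * z) (x * y * z) (x * z)]
            _ = x * y * z + x * z + x * y * z := by rw [isr_ai (x * y * z)]
            _ = x * z := h3.symm
        exact e.symm
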